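/- arXiv:1911.00404 — 3 statements merged into one kernel-verified Lean document; each statement's English description precedes it below -/
import Mathlib

section
/- For every k ≥ 0 the half-step of the alternating minimization contracts: H^{k+1/2} − H* ≤ (1 − σβ₁/L₁)(H^k − H*), where H^{k+1/2} = H(x₁^{k+1}, x₂^k). -/
open Set Filter Topology

private lemma dirDeriv_ge {E : Type*} [NormedAddCommGroup E] [NormedSpace ℝ E]
    {f : E → ℝ} {Df : E →L[ℝ] ℝ} {S : Set E} {z w : E} {c : ℝ}
    (hS : Convex ℝ S) (hz : z ∈ S) (hw : w ∈ S)
    (hf : HasFDerivWithinAt f Df S z)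
    (hle : ∀ t ∈ Set.Ioc (0:ℝ) 1, t * c ≤ f (z + t • (w - z)) - f z) :
    c ≤ Df (w - z) := by
  set φ : ℝ → E := fun t => z + t • (w - z) with hφdef
  have hmaps : Set.MapsTo φ (Set.Icc (0:ℝ) 1) S := fun t ht => hS.add_smul_sub_mem hz hw ht
  have hφd : HasDerivWithinAt φ (w - z) (Set.Icc (0:ℝ) 1) 0 := by
    have h1 : HasDerivAt φ ((1:ℝ) • (w - z)) 0 :=
      ((hasDerivAt_id (0:ℝ)).smul_const (w - z)).const_add z
    simpa using h1.hasDerivWithinAt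
  have hcomp : HasDerivWithinAt (f ∘ φ) (Df (w - z)) (Set.Icc (0:ℝ) 1) 0 :=
    HasFDerivWithinAt.comp_hasDerivWithinAt_of_eq 0 hf hφd hmaps (by simp [hφdef])
  have hslope := hasDerivWithinAt_iff_tendsto_slope.1 hcomp
  rw [Set.Icc_diff_left] at hslope
  have hne : (𝓝[Set.Ioc (0:ℝ) 1] (0:ℝ)).NeBot := by
    refine mem_closure_iff_nhdsWithin_neBot.1 ?_
    rw [closure_Ioc (by norm_num : (0:ℝ) ≠ 1)]
    exact ⟨le_refl 0, by norm_num⟩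
  refine ge_of_tendsto hslope ?_
  filter_upwards [self_mem_nhdsWithin] with t ht
  have h0 := hle t ht
  have hφ0 : φ 0 = z := by simp [hφdef]
  rw [slope_def_field]
  simp only [Function.comp_apply, hφ0, sub_zero]
  rw [le_div_iff₀ ht.1]
  linarith

/-- The composite objective function `H(x₁,x₂) = f(x₁,x₂) + g₁(x₁) + g₂(x₂)`. -/
noncomputable def objFun {B₁ B₂ : Type*} (f : B₁ × B₂ → ℝ) (g₁ : B₁ → ℝ) (g₂ : B₂ → ℝ)
    (x : B₁ × B₂) : ℝ :=
  f x + g₁ x.1 + g₂ x.2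

/-- contraction of the half-step of alternating minimization under
quasi-strong convexity: for every `k ≥ 0`,
`H^{k+1/2} - H* ≤ (1 - σβ₁/L₁) (H^k - H*)`, where `H^{k+1/2} = H(x₁^{k+1}, x₂^k)`. -/
theorem stmt3
    {B₁ B₂ : Type*}
    [NormedAddCommGroup B₁] [NormedSpace ℝ B₁] [CompleteSpace B₁]
    [NormedAddCommGroup B₂] [NormedSpace ℝ B₂] [CompleteSpace B₂]
    (f : B₁ × B₂ → ℝ) (Df : B₁ × B₂ → (B₁ × B₂) →L[ℝ] ℝ)
    (g₁ : B₁ → ℝ) (g₂ : B₂ → ℝ) (S₁ : Set B₁) (S₂ : Set B₂)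
    -- (P3): g₁, g₂ proper convex, subdifferentiable on their domains
    (hS₁c : Convex ℝ S₁) (hS₂c : Convex ℝ S₂)
    (hS₁ne : S₁.Nonempty) (hS₂ne : S₂.Nonempty)
    (hg₁conv : ConvexOn ℝ S₁ g₁) (hg₂conv : ConvexOn ℝ S₂ g₂)
    (hg₁sub : ∀ x₁ ∈ S₁, ∃ d : B₁ →L[ℝ] ℝ, ∀ y₁ ∈ S₁, g₁ x₁ + d (y₁ - x₁) ≤ g₁ y₁)
    (hg₂sub : ∀ x₂ ∈ S₂, ∃ d : B₂ →L[ℝ] ℝ, ∀ y₂ ∈ S₂, g₂ x₂ + d (y₂ - x₂) ≤ g₂ y₂)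
    -- (P4): f convex and Fréchet differentiable on dom g₁ × dom g₂, with derivative Df
    (hfconv : ConvexOn ℝ (S₁ ×ˢ S₂) f)
    (hfdiff : ∀ x ∈ S₁ ×ˢ S₂, HasFDerivWithinAt f (Df x) (S₁ ×ˢ S₂) x)
    -- (P2): a norm `N` on the product space and the constants β₁, β₂
    (N : B₁ × B₂ → ℝ) (β₁ : ℝ) (hβ₁ : 0 ≤ β₁)
    (hNnonneg : ∀ z : B₁ × B₂, 0 ≤ N z)
    (hN₁ : ∀ z : B₁ × B₂, β₁ * ‖z.1‖ ^ 2 ≤ N z ^ 2)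
    -- (P5): first-block descent inequality with finite constant L₁ > 0
    (L₁ : ℝ) (hL₁pos : 0 < L₁)
    (hdesc₁ : ∀ x₁ ∈ S₁, ∀ x₂ ∈ S₂, ∀ h₁ : B₁, x₁ + h₁ ∈ S₁ →
      f (x₁ + h₁, x₂) ≤ f (x₁, x₂) + Df (x₁, x₂) (h₁, 0) + L₁ / 2 * ‖h₁‖ ^ 2)
    -- (P6): nonempty optimal set X with optimal value H*
    (X : Set (B₁ × B₂))
    (hX : X = {y ∈ S₁ ×ˢ S₂ | ∀ z ∈ S₁ ×ˢ S₂, objFun f g₁ g₂ y ≤ objFun f g₁ g₂ z})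
    (hXne : X.Nonempty)
    (Hstar : ℝ) (hHstar : ∀ y ∈ X, objFun f g₁ g₂ y = Hstar)
    -- projections onto X with respect to N
    (proj : B₁ × B₂ → B₁ × B₂)
    (hproj : ∀ z ∈ S₁ ×ˢ S₂, proj z ∈ X ∧ ∀ y ∈ X, N (z - proj z) ≤ N (z - y))
    -- (P8a): quasi-strong convexity of f with modulus σ > 0
    (σ : ℝ) (hσ : 0 < σ)
    (hqsc : ∀ z ∈ S₁ ×ˢ S₂,
      f z + Df z (proj z - z) + σ / 2 * N (z - proj z) ^ 2 ≤ f (proj z))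
    (hσβ₁ : σ * β₁ ≤ L₁)
    -- the alternating minimization sequence
    (x : ℕ → B₁ × B₂)
    (hx0 : x 0 ∈ S₁ ×ˢ S₂)
    (hinit : ∀ y₂ ∈ S₂, objFun f g₁ g₂ (x 0) ≤ objFun f g₁ g₂ ((x 0).1, y₂))
    (hstep1 : ∀ k : ℕ, (x (k + 1)).1 ∈ S₁ ∧ ∀ y₁ ∈ S₁,
      objFun f g₁ g₂ ((x (k + 1)).1, (x k).2) ≤ objFun f g₁ g₂ (y₁, (x k).2))
    (hstep2 : ∀ k : ℕ, (x (k + 1)).2 ∈ S₂ ∧ ∀ y₂ ∈ S₂,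
      objFun f g₁ g₂ (x (k + 1)) ≤ objFun f g₁ g₂ ((x (k + 1)).1, y₂)) :
    ∀ k : ℕ,
      objFun f g₁ g₂ ((x (k + 1)).1, (x k).2) - Hstar ≤
        (1 - σ * β₁ / L₁) * (objFun f g₁ g₂ (x k) - Hstar) := by
  have hmem : ∀ n, x n ∈ S₁ ×ˢ S₂ := by
    intro n
    cases n with
    | zero => exact hx0
    | succ j => exact Set.mem_prod.2 ⟨(hstep1 j).1, (hstep2 j).1⟩
  have hmin2 : ∀ n, ∀ y₂ ∈ S₂, f (x n) + g₂ (x n).2 ≤ f ((x n).1, y₂) + g₂ y₂ := by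
    intro n y₂ hy₂
    cases n with
    | zero =>
        have h := hinit y₂ hy₂
        simp only [objFun] at h
        linarith
    | succ j =>
        have h := (hstep2 j).2 y₂ hy₂
        simp only [objFun] at h
        linarith
  intro k
  set t : ℝ := σ * β₁ / L₁ with ht
  have ht0 : 0 ≤ t := div_nonneg (mul_nonneg hσ.le hβ₁) hL₁pos.le
  have ht1 : t ≤ 1 := (div_le_one hL₁pos).2 hσβ₁
  have hLt : L₁ * t = σ * β₁ := by
    rw [ht]; field_simp
  set z := x k with hzdef
  have hzS : z ∈ S₁ ×ˢ S₂ := hmem k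
  have hz1 : z.1 ∈ S₁ := hzS.1
  have hz2 : z.2 ∈ S₂ := hzS.2
  obtain ⟨hpX, -⟩ := hproj z hzS
  set zb := proj z with hzbdef
  have hzbS : zb ∈ S₁ ×ˢ S₂ := by rw [hX] at hpX; exact hpX.1
  have hzb1 : zb.1 ∈ S₁ := hzbS.1
  have hzb2 : zb.2 ∈ S₂ := hzbS.2
  have hHs : f zb + g₁ zb.1 + g₂ zb.2 = Hstar := by
    have := hHstar zb hpX
    simpa [objFun] using this
  have hdf := hfdiff z hzS
  -- A6 : block-2 optimality direction
  have hA6 : g₂ z.2 - g₂ zb.2 ≤ Df z ((0:B₁), zb.2 - z.2) := by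
    have hwS : ((z.1, zb.2) : B₁ × B₂) ∈ S₁ ×ˢ S₂ := Set.mem_prod.2 ⟨hz1, hzb2⟩
    have hpair : ((z.1, zb.2) : B₁ × B₂) - z = ((0:B₁), zb.2 - z.2) := by
      rw [Prod.ext_iff]; constructor <;> simp
    have key := dirDeriv_ge (hS₁c.prod hS₂c) hzS hwS hdf (c := g₂ z.2 - g₂ zb.2) ?_
    · rwa [hpair] at key
    · intro s hs
      have hy : z.2 + s • (zb.2 - z.2) ∈ S₂ := hS₂c.add_smul_sub_mem hz2 hzb2 ⟨hs.1.le, hs.2⟩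
      have h1 := hmin2 k (z.2 + s • (zb.2 - z.2)) hy
      rw [← hzdef] at h1
      have h2 : g₂ (z.2 + s • (zb.2 - z.2)) ≤ (1 - s) * g₂ z.2 + s * g₂ zb.2 := by
        have hc := hg₂conv.2 hz2 hzb2 (by linarith [hs.2] : (0:ℝ) ≤ 1 - s) hs.1.le (by ring)
        have heq : (1 - s) • z.2 + s • zb.2 = z.2 + s • (zb.2 - z.2) := by module
        rwa [heq] at hc
      have heq2 : z + s • (((z.1, zb.2) : B₁ × B₂) - z) = (z.1, z.2 + s • (zb.2 - z.2)) := by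
        rw [Prod.ext_iff]; constructor <;> simp
      rw [heq2]
      nlinarith [h1, h2]

  -- A5 : quasi-strong convexity
  have hA5 : f z + Df z (zb - z) + σ / 2 * N (z - zb) ^ 2 ≤ f zb := hqsc z hzS
  -- step-1 minimality
  have hh₁S : z.1 + t • (zb.1 - z.1) ∈ S₁ := hS₁c.add_smul_sub_mem hz1 hzb1 ⟨ht0, ht1⟩
  have hA1 := (hstep1 k).2 (z.1 + t • (zb.1 - z.1)) hh₁S
  rw [← hzdef] at hA1
  simp only [objFun] at hA1
  -- descent
  have hA2 := hdesc₁ z.1 hz1 z.2 hz2 (t • (zb.1 - z.1)) hh₁S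
  have hA7 : ‖t • (zb.1 - z.1)‖ ^ 2 = t ^ 2 * ‖zb.1 - z.1‖ ^ 2 := by
    rw [norm_smul, mul_pow, Real.norm_eq_abs, sq_abs]
  rw [hA7] at hA2
  have hA4 : Df (z.1, z.2) (t • (zb.1 - z.1), (0:B₂)) =
      t * (Df z (zb - z) - Df z ((0:B₁), zb.2 - z.2)) := by
    have hv : ((t • (zb.1 - z.1), (0:B₂)) : B₁ × B₂) =
        t • ((zb - z) - ((0:B₁), zb.2 - z.2)) := by
      rw [Prod.ext_iff]; constructor <;> simp [smul_sub]
    have hzz : ((z.1, z.2) : B₁ × B₂) = z := rfl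
    rw [hzz, hv, map_smul, map_sub, smul_eq_mul]
  rw [hA4] at hA2
  -- convexity of g₁
  have hA3 : g₁ (z.1 + t • (zb.1 - z.1)) ≤ (1 - t) * g₁ z.1 + t * g₁ zb.1 := by
    have hc := hg₁conv.2 hz1 hzb1 (by linarith : (0:ℝ) ≤ 1 - t) ht0 (by ring)
    have heq : (1 - t) • z.1 + t • zb.1 = z.1 + t • (zb.1 - z.1) := by module
    rwa [heq] at hc
  -- norm comparison
  have hβB : β₁ * ‖zb.1 - z.1‖ ^ 2 ≤ N (z - zb) ^ 2 := by
    have h := hN₁ (z - zb)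
    rw [Prod.fst_sub, norm_sub_rev] at h
    exact h
  -- key quadratic bound
  have hkey : L₁ / 2 * (t ^ 2 * ‖zb.1 - z.1‖ ^ 2) ≤ t * (σ / 2 * N (z - zb) ^ 2) := by
    have e1 : L₁ / 2 * (t ^ 2 * ‖zb.1 - z.1‖ ^ 2) =
        σ / 2 * (t * (β₁ * ‖zb.1 - z.1‖ ^ 2)) := by
      linear_combination (t * ‖zb.1 - z.1‖ ^ 2 / 2) * hLt
    rw [e1]
    have e2 : t * (β₁ * ‖zb.1 - z.1‖ ^ 2) ≤ t * N (z - zb) ^ 2 :=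
      mul_le_mul_of_nonneg_left hβB ht0
    nlinarith [mul_le_mul_of_nonneg_left e2 (by positivity : (0:ℝ) ≤ σ / 2)]
  -- combine
  have hPQ : Df z (zb - z) - Df z ((0:B₁), zb.2 - z.2) ≤
      (f zb - f z - σ / 2 * N (z - zb) ^ 2) - (g₂ z.2 - g₂ zb.2) := by linarith
  have hPQt := mul_le_mul_of_nonneg_left hPQ ht0
  simp only [objFun]
  have hzz : f (z.1, z.2) = f z := rfl
  rw [hzz] at hA2
  clear_value t z zb
  have hHst : t * (f zb + g₁ zb.1 + g₂ zb.2) = t * Hstar := by rw [hHs]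
  linarith [hA1, hA2, hA3, hkey, hPQt, hHs, hHst]
end

section
/- Define m* = max{0, −1 + ⌈log₂( (H⁰ − H*) / (min{L₁/β₁, L₂/β₂} R²) )⌉} and p* = 2 (β₁/L₁ + β₂/L₂)^{-1} / min{L₁/β₁, L₂/β₂}. Then for all k ≥ 0 the alternating minimization iterates satisfy H^k − H* ≤ max{ (1/2)^k (H⁰ − H*), 4R² (β₁/L₁ + β₂/L₂)^{-1} / (max{k − m*, 0} + p*) }; in particular, for all k ≥ m*, H^k − H* ≤ 4R² (β₁/L₁ + β₂/L₂)^{-1} / (k − m* + p*). -/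
open Set
open Filter Topology

private lemma aux_nonneg (a b : ℝ) (h : ∀ t : ℝ, 0 < t → t ≤ 1 → 0 ≤ a * t + b * t ^ 2) :
    0 ≤ a := by
  by_contra hn
  push_neg at hn
  rcases le_or_gt b 0 with hb | hb
  · have := h 1 one_pos le_rfl; nlinarith
  · have ht0 : 0 < min 1 (-a / (2 * b)) :=
      lt_min one_pos (div_pos (by linarith) (by linarith))
    have ht1 : min 1 (-a / (2 * b)) ≤ 1 := min_le_left _ _
    have h2 : min 1 (-a / (2 * b)) ≤ -a / (2 * b) := min_le_right _ _
    have h3 := h _ ht0 ht1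
    have h5 : b * (-a / (2 * b)) = -a / 2 := by field_simp
    have h4 : b * min 1 (-a / (2 * b)) ≤ -a / 2 := by
      calc b * min 1 (-a / (2 * b)) ≤ b * (-a / (2 * b)) :=
            mul_le_mul_of_nonneg_left h2 hb.le
        _ = -a / 2 := h5
    nlinarith

private lemma comb_eq {E : Type*} [AddCommGroup E] [Module ℝ E] (a b : E) (t : ℝ) :
    a + t • (b - a) = (1 - t) • a + t • b := by
  rw [smul_sub, sub_smul, one_smul]; abel

private lemma grad_ineq {E : Type*} [NormedAddCommGroup E] [NormedSpace ℝ E]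
    {S : Set E} (hS : Convex ℝ S) {f : E → ℝ} (hf : ConvexOn ℝ S f)
    {a y : E} (ha : a ∈ S) (hy : y ∈ S) {D : E →L[ℝ] ℝ}
    (hD : HasFDerivWithinAt f D S a) : D (y - a) ≤ f y - f a := by
  set c : ℝ → E := fun t => a + t • (y - a) with hc
  have hderiv : HasDerivWithinAt (f ∘ c) (D (y - a)) (Icc (0:ℝ) 1) 0 := by
    have h1 : HasDerivAt c (y - a) 0 := by
      have h0 : HasDerivAt (fun t : ℝ => t • (y - a)) ((1:ℝ) • (y - a)) 0 :=
        (hasDerivAt_id 0).smul_const (y - a)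
      simpa [hc] using h0.const_add a
    have hmaps : MapsTo c (Icc (0:ℝ) 1) S := fun t ht => hS.add_smul_sub_mem ha hy ht
    have hc0 : a = c 0 := by simp [hc]
    exact HasFDerivWithinAt.comp_hasDerivWithinAt_of_eq 0 hD h1.hasDerivWithinAt hmaps hc0
  rw [hasDerivWithinAt_iff_tendsto_slope] at hderiv
  have hmem : Ioc (0:ℝ) 1 ∈ 𝓝[>] (0:ℝ) := Ioc_mem_nhdsGT_of_mem ⟨le_refl 0, one_pos⟩
  have hsub : 𝓝[>] (0:ℝ) ≤ 𝓝[Icc (0:ℝ) 1 \ {0}] 0 := by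
    refine (nhdsWithin_le_of_mem hmem).trans (nhdsWithin_mono _ ?_)
    exact fun t ht => ⟨Ioc_subset_Icc_self ht, ne_of_gt ht.1⟩
  refine le_of_tendsto (hderiv.mono_left hsub) ?_
  filter_upwards [hmem] with t ht
  have hconv := hf.2 ha hy (by linarith [ht.2] : (0:ℝ) ≤ 1 - t) ht.1.le (by ring)
  rw [← comb_eq] at hconv
  simp only [smul_eq_mul] at hconv
  have hs : slope (f ∘ c) 0 t = (f (c t) - f a) / t := by
    rw [slope_def_field]; simp [hc]
  rw [hs, div_le_iff₀ ht.1]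
  have : f (c t) ≤ f a + t * (f y - f a) := by
    simp only [hc]; nlinarith [hconv]
  linarith

set_option maxHeartbeats 1000000 in
/-- sublinear convergence of alternating minimization in the plain
convex case: with `m* = max{0, -1 + ⌈log₂((H⁰ - H*)/(min{L₁/β₁, L₂/β₂} R²))⌉}` and
`p* = 2 (β₁/L₁ + β₂/L₂)⁻¹ / min{L₁/β₁, L₂/β₂}`, for all `k ≥ 0`,
`H^k - H* ≤ max{ (1/2)^k (H⁰ - H*), 4R² (β₁/L₁ + β₂/L₂)⁻¹ / ([k - m*]₊ + p*) }`,
and in particular `H^k - H* ≤ 4R² (β₁/L₁ + β₂/L₂)⁻¹ / (k - m* + p*)` for `k ≥ m*`. -/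
theorem stmt9
    {B₁ B₂ : Type*}
    [NormedAddCommGroup B₁] [NormedSpace ℝ B₁] [CompleteSpace B₁]
    [NormedAddCommGroup B₂] [NormedSpace ℝ B₂] [CompleteSpace B₂]
    (f : B₁ × B₂ → ℝ) (Df : B₁ × B₂ → (B₁ × B₂) →L[ℝ] ℝ)
    (g₁ : B₁ → ℝ) (g₂ : B₂ → ℝ) (S₁ : Set B₁) (S₂ : Set B₂)
    -- (P3): g₁, g₂ proper convex, subdifferentiable on their domains
    (hS₁c : Convex ℝ S₁) (hS₂c : Convex ℝ S₂)
    (hS₁ne : S₁.Nonempty) (hS₂ne : S₂.Nonempty)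
    (hg₁conv : ConvexOn ℝ S₁ g₁) (hg₂conv : ConvexOn ℝ S₂ g₂)
    (hg₁sub : ∀ x₁ ∈ S₁, ∃ d : B₁ →L[ℝ] ℝ, ∀ y₁ ∈ S₁, g₁ x₁ + d (y₁ - x₁) ≤ g₁ y₁)
    (hg₂sub : ∀ x₂ ∈ S₂, ∃ d : B₂ →L[ℝ] ℝ, ∀ y₂ ∈ S₂, g₂ x₂ + d (y₂ - x₂) ≤ g₂ y₂)
    -- (P4): f convex and Fréchet differentiable on dom g₁ × dom g₂, with derivative Df
    (hfconv : ConvexOn ℝ (S₁ ×ˢ S₂) f)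
    (hfdiff : ∀ x ∈ S₁ ×ˢ S₂, HasFDerivWithinAt f (Df x) (S₁ ×ˢ S₂) x)
    -- (P2): a norm `N` on the product space and the constants β₁, β₂
    (N : B₁ × B₂ → ℝ) (β₁ β₂ : ℝ) (hβ₁ : 0 < β₁) (hβ₂ : 0 < β₂)
    (hNnonneg : ∀ z : B₁ × B₂, 0 ≤ N z)
    (hN₁ : ∀ z : B₁ × B₂, β₁ * ‖z.1‖ ^ 2 ≤ N z ^ 2)
    (hN₂ : ∀ z : B₁ × B₂, β₂ * ‖z.2‖ ^ 2 ≤ N z ^ 2)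
    -- (P5): block Lipschitz continuity of the partial derivatives, with finite
    -- constants L₁, L₂ > 0, together with the (equivalent) block descent inequalities
    (L₁ L₂ : ℝ) (hL₁pos : 0 < L₁) (hL₂pos : 0 < L₂)
    (hlip₁ : ∀ x₁ ∈ S₁, ∀ x₂ ∈ S₂, ∀ h₁ : B₁, x₁ + h₁ ∈ S₁ →
      ‖(Df (x₁ + h₁, x₂)).comp (ContinuousLinearMap.inl ℝ B₁ B₂) -
        (Df (x₁, x₂)).comp (ContinuousLinearMap.inl ℝ B₁ B₂)‖ ≤ L₁ * ‖h₁‖)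
    (hlip₂ : ∀ x₁ ∈ S₁, ∀ x₂ ∈ S₂, ∀ h₂ : B₂, x₂ + h₂ ∈ S₂ →
      ‖(Df (x₁, x₂ + h₂)).comp (ContinuousLinearMap.inr ℝ B₁ B₂) -
        (Df (x₁, x₂)).comp (ContinuousLinearMap.inr ℝ B₁ B₂)‖ ≤ L₂ * ‖h₂‖)
    (hdesc₁ : ∀ x₁ ∈ S₁, ∀ x₂ ∈ S₂, ∀ h₁ : B₁, x₁ + h₁ ∈ S₁ →
      f (x₁ + h₁, x₂) ≤ f (x₁, x₂) + Df (x₁, x₂) (h₁, 0) + L₁ / 2 * ‖h₁‖ ^ 2)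
    (hdesc₂ : ∀ x₁ ∈ S₁, ∀ x₂ ∈ S₂, ∀ h₂ : B₂, x₂ + h₂ ∈ S₂ →
      f (x₁, x₂ + h₂) ≤ f (x₁, x₂) + Df (x₁, x₂) (0, h₂) + L₂ / 2 * ‖h₂‖ ^ 2)
    -- (P6): nonempty optimal set X with optimal value H*
    (X : Set (B₁ × B₂))
    (hX : X = {y ∈ S₁ ×ˢ S₂ | ∀ z ∈ S₁ ×ˢ S₂, objFun f g₁ g₂ y ≤ objFun f g₁ g₂ z})
    (hXne : X.Nonempty)
    (Hstar : ℝ) (hHstar : ∀ y ∈ X, objFun f g₁ g₂ y = Hstar)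
    -- projections onto X with respect to N
    (proj : B₁ × B₂ → B₁ × B₂)
    (hproj : ∀ z ∈ S₁ ×ˢ S₂, proj z ∈ X ∧ ∀ y ∈ X, N (z - proj z) ≤ N (z - y))
    -- (P8c): g₁, g₂ closed (lower semicontinuous), compact level set, diameter R
    (hg₁lsc : LowerSemicontinuousOn g₁ S₁) (hg₂lsc : LowerSemicontinuousOn g₂ S₂)
    (hS₁cl : IsClosed S₁) (hS₂cl : IsClosed S₂)
    -- the alternating minimization sequence
    (x : ℕ → B₁ × B₂)
    (hx0 : x 0 ∈ S₁ ×ˢ S₂)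
    (hinit : ∀ y₂ ∈ S₂, objFun f g₁ g₂ (x 0) ≤ objFun f g₁ g₂ ((x 0).1, y₂))
    (hstep1 : ∀ k : ℕ, (x (k + 1)).1 ∈ S₁ ∧ ∀ y₁ ∈ S₁,
      objFun f g₁ g₂ ((x (k + 1)).1, (x k).2) ≤ objFun f g₁ g₂ (y₁, (x k).2))
    (hstep2 : ∀ k : ℕ, (x (k + 1)).2 ∈ S₂ ∧ ∀ y₂ ∈ S₂,
      objFun f g₁ g₂ (x (k + 1)) ≤ objFun f g₁ g₂ ((x (k + 1)).1, y₂))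
    -- compactness of the level set of H at x⁰ and its diameter R relative to X
    (hcomp : IsCompact {z ∈ S₁ ×ˢ S₂ | objFun f g₁ g₂ z ≤ objFun f g₁ g₂ (x 0)})
    (R : ℝ) (hRpos : 0 < R)
    (hR : ∀ z ∈ S₁ ×ˢ S₂, objFun f g₁ g₂ z ≤ objFun f g₁ g₂ (x 0) →
      ∀ y ∈ X, N (z - y) ≤ R)
    (hH0 : Hstar < objFun f g₁ g₂ (x 0))
    -- the index shift m* and the constant p*
    (mstar : ℤ)
    (hmstar : mstar = max 0 (-1 +
      ⌈Real.logb 2 ((objFun f g₁ g₂ (x 0) - Hstar) / (min (L₁ / β₁) (L₂ / β₂) * R ^ 2))⌉))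
    (pstar : ℝ)
    (hpstar : pstar = 2 * (β₁ / L₁ + β₂ / L₂)⁻¹ / min (L₁ / β₁) (L₂ / β₂)) :
    (∀ k : ℕ,
      objFun f g₁ g₂ (x k) - Hstar ≤
        max ((1 / 2 : ℝ) ^ k * (objFun f g₁ g₂ (x 0) - Hstar))
          (4 * R ^ 2 * (β₁ / L₁ + β₂ / L₂)⁻¹ /
            (max ((k : ℝ) - (mstar : ℝ)) 0 + pstar))) ∧
    (∀ k : ℕ, (mstar : ℝ) ≤ (k : ℝ) →
      objFun f g₁ g₂ (x k) - Hstar ≤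
        4 * R ^ 2 * (β₁ / L₁ + β₂ / L₂)⁻¹ / ((k : ℝ) - (mstar : ℝ) + pstar)) := by
  obtain ⟨y, hyX⟩ := hXne
  have hyX' := hyX
  rw [hX] at hyX'
  have hymem : y ∈ S₁ ×ˢ S₂ := hyX'.1
  have hymin : ∀ z ∈ S₁ ×ˢ S₂, objFun f g₁ g₂ y ≤ objFun f g₁ g₂ z := hyX'.2
  have hyH : objFun f g₁ g₂ y = Hstar := hHstar y hyX
  have hSc : Convex ℝ (S₁ ×ˢ S₂) := hS₁c.prod hS₂c
  have hxmem : ∀ k, x k ∈ S₁ ×ˢ S₂ := by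
    intro k
    cases k with
    | zero => exact hx0
    | succ n => exact ⟨(hstep1 n).1, (hstep2 n).1⟩
  have hW : ∀ k, objFun f g₁ g₂ ((x (k+1)).1, (x k).2) ≤ objFun f g₁ g₂ (x k) :=
    fun k => (hstep1 k).2 (x k).1 (hxmem k).1
  have hdec1 : ∀ k, objFun f g₁ g₂ (x (k+1)) ≤ objFun f g₁ g₂ ((x (k+1)).1, (x k).2) :=
    fun k => (hstep2 k).2 (x k).2 (hxmem k).2
  have hmono : ∀ k, objFun f g₁ g₂ (x (k+1)) ≤ objFun f g₁ g₂ (x k) :=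
    fun k => (hdec1 k).trans (hW k)
  have hlev : ∀ k, objFun f g₁ g₂ (x k) ≤ objFun f g₁ g₂ (x 0) := by
    intro k
    induction k with
    | zero => exact le_rfl
    | succ n ih => exact (hmono n).trans ih
  have hlow : ∀ z ∈ S₁ ×ˢ S₂, Hstar ≤ objFun f g₁ g₂ z := fun z hz => hyH ▸ hymin z hz
  have hopt2 : ∀ k, ∀ y₂ ∈ S₂, objFun f g₁ g₂ (x k) ≤ objFun f g₁ g₂ ((x k).1, y₂) := by
    intro k
    cases k with
    | zero => exact hinit
    | succ n => exact (hstep2 n).2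
  -- block optimality conditions
  have bo2 : ∀ a : B₁ × B₂, a ∈ S₁ ×ˢ S₂ →
      (∀ y₂ ∈ S₂, objFun f g₁ g₂ a ≤ objFun f g₁ g₂ (a.1, y₂)) →
      0 ≤ Df a (0, y.2 - a.2) + g₂ y.2 - g₂ a.2 := by
    intro a ha hopt
    refine aux_nonneg _ (L₂ / 2 * ‖y.2 - a.2‖ ^ 2) ?_
    intro t ht0 ht1
    have hmem2 : a.2 + t • (y.2 - a.2) ∈ S₂ :=
      hS₂c.add_smul_sub_mem ha.2 hymem.2 ⟨ht0.le, ht1⟩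
    have h1 := hdesc₂ a.1 ha.1 a.2 ha.2 (t • (y.2 - a.2)) hmem2
    simp only [Prod.mk.eta] at h1
    have hsm : (Df a) ((0:B₁), t • (y.2 - a.2)) = t * Df a (0, y.2 - a.2) := by
      have he : ((0:B₁), t • (y.2 - a.2)) = t • ((0:B₁), y.2 - a.2) := by
        simp [Prod.smul_mk]
      rw [he, map_smul, smul_eq_mul]
    have hnm : ‖t • (y.2 - a.2)‖ ^ 2 = t ^ 2 * ‖y.2 - a.2‖ ^ 2 := by
      rw [norm_smul, Real.norm_eq_abs, mul_pow, sq_abs]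
    rw [hsm, hnm] at h1
    have h2 := hg₂conv.2 ha.2 hymem.2 (by linarith : (0:ℝ) ≤ 1 - t) ht0.le (by ring)
    rw [← comb_eq] at h2
    simp only [smul_eq_mul] at h2
    have h3 := hopt (a.2 + t • (y.2 - a.2)) hmem2
    simp only [objFun] at h3
    nlinarith [h1, h2, h3]
  have bo1 : ∀ a : B₁ × B₂, a ∈ S₁ ×ˢ S₂ →
      (∀ y₁ ∈ S₁, objFun f g₁ g₂ a ≤ objFun f g₁ g₂ (y₁, a.2)) →
      0 ≤ Df a (y.1 - a.1, 0) + g₁ y.1 - g₁ a.1 := by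
    intro a ha hopt
    refine aux_nonneg _ (L₁ / 2 * ‖y.1 - a.1‖ ^ 2) ?_
    intro t ht0 ht1
    have hmem1 : a.1 + t • (y.1 - a.1) ∈ S₁ :=
      hS₁c.add_smul_sub_mem ha.1 hymem.1 ⟨ht0.le, ht1⟩
    have h1 := hdesc₁ a.1 ha.1 a.2 ha.2 (t • (y.1 - a.1)) hmem1
    simp only [Prod.mk.eta] at h1
    have hsm : (Df a) (t • (y.1 - a.1), (0:B₂)) = t * Df a (y.1 - a.1, 0) := by
      have he : (t • (y.1 - a.1), (0:B₂)) = t • ((y.1 - a.1), (0:B₂)) := by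
        simp [Prod.smul_mk]
      rw [he, map_smul, smul_eq_mul]
    have hnm : ‖t • (y.1 - a.1)‖ ^ 2 = t ^ 2 * ‖y.1 - a.1‖ ^ 2 := by
      rw [norm_smul, Real.norm_eq_abs, mul_pow, sq_abs]
    rw [hsm, hnm] at h1
    have h2 := hg₁conv.2 ha.1 hymem.1 (by linarith : (0:ℝ) ≤ 1 - t) ht0.le (by ring)
    rw [← comb_eq] at h2
    simp only [smul_eq_mul] at h2
    have h3 := hopt (a.1 + t • (y.1 - a.1)) hmem1
    simp only [objFun] at h3
    nlinarith [h1, h2, h3]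
  have hGI : ∀ a : B₁ × B₂, a ∈ S₁ ×ˢ S₂ → Df a (y - a) ≤ f y - f a :=
    fun a ha => grad_ineq hSc hfconv ha hymem (hfdiff a ha)
  have hsplit : ∀ a : B₁ × B₂, Df a (y - a) = Df a (y.1 - a.1, 0) + Df a (0, y.2 - a.2) := by
    intro a
    have he : (y.1 - a.1, (0:B₂)) + ((0:B₁), y.2 - a.2) = y - a := by
      ext <;> simp
    rw [← he, map_add]
  -- branch 1 of the key recursion
  have hbr1 : ∀ k, ∀ t : ℝ, 0 ≤ t → t ≤ 1 →
      objFun f g₁ g₂ (x (k+1)) ≤ objFun f g₁ g₂ (x k)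
        + t * (Hstar - objFun f g₁ g₂ (x k)) + L₁ / β₁ * R ^ 2 / 2 * t ^ 2 := by
    intro k t ht0 ht1
    have haS : x k ∈ S₁ ×ˢ S₂ := hxmem k
    have hz1 : (x k).1 + t • (y.1 - (x k).1) ∈ S₁ :=
      hS₁c.add_smul_sub_mem haS.1 hymem.1 ⟨ht0, ht1⟩
    have h0 : objFun f g₁ g₂ (x (k+1)) ≤
        objFun f g₁ g₂ ((x k).1 + t • (y.1 - (x k).1), (x k).2) :=
      (hdec1 k).trans ((hstep1 k).2 _ hz1)
    have h1 := hdesc₁ (x k).1 haS.1 (x k).2 haS.2 (t • (y.1 - (x k).1)) hz1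
    simp only [Prod.mk.eta] at h1
    have hsm : (Df (x k)) (t • (y.1 - (x k).1), (0:B₂)) = t * Df (x k) (y.1 - (x k).1, 0) := by
      have he : (t • (y.1 - (x k).1), (0:B₂)) = t • ((y.1 - (x k).1), (0:B₂)) := by
        simp [Prod.smul_mk]
      rw [he, map_smul, smul_eq_mul]
    have hnm : ‖t • (y.1 - (x k).1)‖ ^ 2 = t ^ 2 * ‖y.1 - (x k).1‖ ^ 2 := by
      rw [norm_smul, Real.norm_eq_abs, mul_pow, sq_abs]
    rw [hsm, hnm] at h1
    have h2 := hg₁conv.2 haS.1 hymem.1 (by linarith : (0:ℝ) ≤ 1 - t) ht0 (by ring)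
    rw [← comb_eq] at h2
    simp only [smul_eq_mul] at h2
    have h3 := bo2 (x k) haS (hopt2 k)
    have h4 := hGI (x k) haS
    rw [hsplit (x k)] at h4
    have h5 : N (x k - y) ≤ R := hR (x k) haS (hlev k) y hyX
    have h6 : β₁ * ‖y.1 - (x k).1‖ ^ 2 ≤ R ^ 2 := by
      have h7 : ‖(x k - y).1‖ = ‖y.1 - (x k).1‖ := norm_sub_rev _ _
      calc β₁ * ‖y.1 - (x k).1‖ ^ 2 = β₁ * ‖(x k - y).1‖ ^ 2 := by rw [h7]
        _ ≤ N (x k - y) ^ 2 := hN₁ _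
        _ ≤ R ^ 2 := pow_le_pow_left₀ (hNnonneg _) h5 2
    have h8 : ‖y.1 - (x k).1‖ ^ 2 ≤ R ^ 2 / β₁ := by
      rw [le_div_iff₀ hβ₁]; linarith
    have hkey : Df (x k) (y.1 - (x k).1, 0) + g₁ y.1 - g₁ (x k).1 ≤
        Hstar - objFun f g₁ g₂ (x k) := by
      have hyobj : objFun f g₁ g₂ y = Hstar := hyH
      simp only [objFun] at hyobj ⊢
      linarith
    have hkey2 : t * (Df (x k) (y.1 - (x k).1, 0) + g₁ y.1 - g₁ (x k).1) ≤
        t * (Hstar - objFun f g₁ g₂ (x k)) := mul_le_mul_of_nonneg_left hkey ht0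
    have hnrm : L₁ / 2 * (t ^ 2 * ‖y.1 - (x k).1‖ ^ 2) ≤ L₁ / β₁ * R ^ 2 / 2 * t ^ 2 := by
      have h9 : t ^ 2 * ‖y.1 - (x k).1‖ ^ 2 ≤ t ^ 2 * (R ^ 2 / β₁) :=
        mul_le_mul_of_nonneg_left h8 (sq_nonneg t)
      have h10 : L₁ / 2 * (t ^ 2 * ‖y.1 - (x k).1‖ ^ 2) ≤ L₁ / 2 * (t ^ 2 * (R ^ 2 / β₁)) :=
        mul_le_mul_of_nonneg_left h9 (by positivity)
      have h11 : L₁ / 2 * (t ^ 2 * (R ^ 2 / β₁)) = L₁ / β₁ * R ^ 2 / 2 * t ^ 2 := by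
        field_simp
      linarith
    refine h0.trans ?_
    simp only [objFun] at hkey2 ⊢
    linarith [h1, h2, hkey2, hnrm]
  -- branch 2 of the key recursion
  have hbr2 : ∀ k, ∀ t : ℝ, 0 ≤ t → t ≤ 1 →
      objFun f g₁ g₂ (x (k+1)) ≤ objFun f g₁ g₂ (x k)
        + t * (Hstar - objFun f g₁ g₂ (x k)) + L₂ / β₂ * R ^ 2 / 2 * t ^ 2 := by
    intro k t ht0 ht1
    have hwS : ((x (k+1)).1, (x k).2) ∈ S₁ ×ˢ S₂ := ⟨(hstep1 k).1, (hxmem k).2⟩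
    have hwlev : objFun f g₁ g₂ ((x (k+1)).1, (x k).2) ≤ objFun f g₁ g₂ (x 0) :=
      (hW k).trans (hlev k)
    have hwopt : ∀ y₁ ∈ S₁, objFun f g₁ g₂ ((x (k+1)).1, (x k).2) ≤
        objFun f g₁ g₂ (y₁, (x k).2) := (hstep1 k).2
    have hz2 : (x k).2 + t • (y.2 - (x k).2) ∈ S₂ :=
      hS₂c.add_smul_sub_mem (hxmem k).2 hymem.2 ⟨ht0, ht1⟩
    have h0 : objFun f g₁ g₂ (x (k+1)) ≤
        objFun f g₁ g₂ ((x (k+1)).1, (x k).2 + t • (y.2 - (x k).2)) :=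
      (hstep2 k).2 _ hz2
    have h1 := hdesc₂ (x (k+1)).1 hwS.1 (x k).2 hwS.2 (t • (y.2 - (x k).2)) hz2
    have hsm : (Df ((x (k+1)).1, (x k).2)) ((0:B₁), t • (y.2 - (x k).2)) =
        t * Df ((x (k+1)).1, (x k).2) (0, y.2 - (x k).2) := by
      have he : ((0:B₁), t • (y.2 - (x k).2)) = t • ((0:B₁), y.2 - (x k).2) := by
        simp [Prod.smul_mk]
      rw [he, map_smul, smul_eq_mul]
    have hnm : ‖t • (y.2 - (x k).2)‖ ^ 2 = t ^ 2 * ‖y.2 - (x k).2‖ ^ 2 := by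
      rw [norm_smul, Real.norm_eq_abs, mul_pow, sq_abs]
    rw [hsm, hnm] at h1
    have h2 := hg₂conv.2 (hxmem k).2 hymem.2 (by linarith : (0:ℝ) ≤ 1 - t) ht0 (by ring)
    rw [← comb_eq] at h2
    simp only [smul_eq_mul] at h2
    have h3 := bo1 ((x (k+1)).1, (x k).2) hwS hwopt
    have h4 := hGI ((x (k+1)).1, (x k).2) hwS
    rw [hsplit ((x (k+1)).1, (x k).2)] at h4
    have h5 : N (((x (k+1)).1, (x k).2) - y) ≤ R := hR _ hwS hwlev y hyX
    have h6 : β₂ * ‖y.2 - (x k).2‖ ^ 2 ≤ R ^ 2 := by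
      have h7 : ‖((((x (k+1)).1, (x k).2) : B₁ × B₂) - y).2‖ = ‖y.2 - (x k).2‖ :=
        norm_sub_rev _ _
      calc β₂ * ‖y.2 - (x k).2‖ ^ 2
          = β₂ * ‖((((x (k+1)).1, (x k).2) : B₁ × B₂) - y).2‖ ^ 2 := by rw [h7]
        _ ≤ N (((x (k+1)).1, (x k).2) - y) ^ 2 := hN₂ _
        _ ≤ R ^ 2 := pow_le_pow_left₀ (hNnonneg _) h5 2
    have h8 : ‖y.2 - (x k).2‖ ^ 2 ≤ R ^ 2 / β₂ := by
      rw [le_div_iff₀ hβ₂]; linarith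
    have hkey : Df ((x (k+1)).1, (x k).2) (0, y.2 - (x k).2) + g₂ y.2 - g₂ (x k).2 ≤
        Hstar - objFun f g₁ g₂ ((x (k+1)).1, (x k).2) := by
      have hyobj : objFun f g₁ g₂ y = Hstar := hyH
      simp only [objFun] at hyobj ⊢
      linarith
    have hkey2 : t * (Df ((x (k+1)).1, (x k).2) (0, y.2 - (x k).2) + g₂ y.2 - g₂ (x k).2) ≤
        t * (Hstar - objFun f g₁ g₂ ((x (k+1)).1, (x k).2)) :=
      mul_le_mul_of_nonneg_left hkey ht0
    have hnrm : L₂ / 2 * (t ^ 2 * ‖y.2 - (x k).2‖ ^ 2) ≤ L₂ / β₂ * R ^ 2 / 2 * t ^ 2 := by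
      have h9 : t ^ 2 * ‖y.2 - (x k).2‖ ^ 2 ≤ t ^ 2 * (R ^ 2 / β₂) :=
        mul_le_mul_of_nonneg_left h8 (sq_nonneg t)
      have h10 : L₂ / 2 * (t ^ 2 * ‖y.2 - (x k).2‖ ^ 2) ≤ L₂ / 2 * (t ^ 2 * (R ^ 2 / β₂)) :=
        mul_le_mul_of_nonneg_left h9 (by positivity)
      have h11 : L₂ / 2 * (t ^ 2 * (R ^ 2 / β₂)) = L₂ / β₂ * R ^ 2 / 2 * t ^ 2 := by
        field_simp
      linarith
    have hmid : objFun f g₁ g₂ (x (k+1)) ≤ objFun f g₁ g₂ ((x (k+1)).1, (x k).2)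
        + t * (Hstar - objFun f g₁ g₂ ((x (k+1)).1, (x k).2))
        + L₂ / β₂ * R ^ 2 / 2 * t ^ 2 := by
      refine h0.trans ?_
      simp only [objFun] at hkey2 ⊢
      linarith [h1, h2, hkey2, hnrm]
    have hwmono := hW k
    have hcoef : (1 - t) * objFun f g₁ g₂ ((x (k+1)).1, (x k).2) ≤
        (1 - t) * objFun f g₁ g₂ (x k) :=
      mul_le_mul_of_nonneg_left hwmono (by linarith)
    linarith [hmid, hcoef]
  -- combined recursion
  have hrec : ∀ k, ∀ t : ℝ, 0 ≤ t → t ≤ 1 →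
      objFun f g₁ g₂ (x (k+1)) - Hstar ≤ (1 - t) * (objFun f g₁ g₂ (x k) - Hstar)
        + min (L₁ / β₁) (L₂ / β₂) * R ^ 2 / 2 * t ^ 2 := by
    intro k t ht0 ht1
    rcases min_cases (L₁ / β₁) (L₂ / β₂) with ⟨hmin, _⟩ | ⟨hmin, _⟩ <;> rw [hmin]
    · have := hbr1 k t ht0 ht1; linarith [this]
    · have := hbr2 k t ht0 ht1; linarith [this]
  set M : ℝ := min (L₁ / β₁) (L₂ / β₂) with hM
  have hMpos : 0 < M := lt_min (div_pos hL₁pos hβ₁) (div_pos hL₂pos hβ₂)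
  have hDpos : 0 < M * R ^ 2 := by positivity
  have hFnn : ∀ k, 0 ≤ objFun f g₁ g₂ (x k) - Hstar :=
    fun k => by linarith [hlow (x k) (hxmem k)]
  have hhalf : ∀ k, objFun f g₁ g₂ (x (k+1)) - Hstar ≤ M * R ^ 2 / 2 := by
    intro k
    have := hrec k 1 zero_le_one le_rfl
    linarith [this]
  have hstepq : ∀ k, objFun f g₁ g₂ (x k) - Hstar ≤ M * R ^ 2 →
      objFun f g₁ g₂ (x (k+1)) - Hstar ≤ (objFun f g₁ g₂ (x k) - Hstar)
        - (objFun f g₁ g₂ (x k) - Hstar) ^ 2 / (2 * (M * R ^ 2)) := by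
    intro k hk
    have ht0 : 0 ≤ (objFun f g₁ g₂ (x k) - Hstar) / (M * R ^ 2) :=
      div_nonneg (hFnn k) hDpos.le
    have ht1 : (objFun f g₁ g₂ (x k) - Hstar) / (M * R ^ 2) ≤ 1 :=
      (div_le_one hDpos).mpr hk
    have := hrec k _ ht0 ht1
    have heq : (1 - (objFun f g₁ g₂ (x k) - Hstar) / (M * R ^ 2)) *
          (objFun f g₁ g₂ (x k) - Hstar)
        + M * R ^ 2 / 2 * ((objFun f g₁ g₂ (x k) - Hstar) / (M * R ^ 2)) ^ 2
        = (objFun f g₁ g₂ (x k) - Hstar)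
          - (objFun f g₁ g₂ (x k) - Hstar) ^ 2 / (2 * (M * R ^ 2)) := by
      field_simp
      ring
    linarith [this, heq.le, heq.ge]
  -- the main sublinear bound, for k ≥ 1
  have hbound : ∀ k : ℕ, 1 ≤ k →
      objFun f g₁ g₂ (x k) - Hstar ≤ 2 * (M * R ^ 2) / ((k : ℝ) + 3) := by
    intro k hk
    induction k, hk using Nat.le_induction with
    | base =>
      have := hhalf 0
      have he : 2 * (M * R ^ 2) / ((1 : ℝ) + 3) = M * R ^ 2 / 2 := by ring
      push_cast
      linarith
    | succ n hn ih =>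
      have hq1 : (1 : ℝ) ≤ (n : ℝ) := by exact_mod_cast hn
      have hden : (0 : ℝ) < (n : ℝ) + 3 := by linarith
      have hden4 : (0 : ℝ) < (n : ℝ) + 4 := by linarith
      have hBD : 2 * (M * R ^ 2) / ((n : ℝ) + 3) ≤ M * R ^ 2 := by
        rw [div_le_iff₀ hden]; nlinarith
      have hFn : objFun f g₁ g₂ (x n) - Hstar ≤ M * R ^ 2 := ih.trans hBD
      have h1 := hstepq n hFn
      have hu2 : (objFun f g₁ g₂ (x n) - Hstar) * ((n : ℝ) + 3) ≤ 2 * (M * R ^ 2) :=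
        (le_div_iff₀ hden).mp ih
      have hform : (objFun f g₁ g₂ (x n) - Hstar)
            - (objFun f g₁ g₂ (x n) - Hstar) ^ 2 / (2 * (M * R ^ 2))
          = (2 * (M * R ^ 2) * (objFun f g₁ g₂ (x n) - Hstar)
              - (objFun f g₁ g₂ (x n) - Hstar) ^ 2) / (2 * (M * R ^ 2)) := by
        field_simp
      have hgoal2 : (2 * (M * R ^ 2) * (objFun f g₁ g₂ (x n) - Hstar)
            - (objFun f g₁ g₂ (x n) - Hstar) ^ 2) / (2 * (M * R ^ 2))
          ≤ 2 * (M * R ^ 2) / ((n : ℝ) + 4) := by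
        rw [div_le_div_iff₀ (by positivity) hden4]
        nlinarith [hFnn n, sq_nonneg (2 * (M * R ^ 2)
          - (objFun f g₁ g₂ (x n) - Hstar) * ((n : ℝ) + 3)),
          mul_nonneg (mul_nonneg (hFnn n)
            (sub_nonneg.mpr hu2 : (0:ℝ) ≤ 2 * (M * R ^ 2)
              - (objFun f g₁ g₂ (x n) - Hstar) * ((n : ℝ) + 3)))
            (by linarith : (0:ℝ) ≤ (n : ℝ) + 2)]
      have hcast : ((n + 1 : ℕ) : ℝ) + 3 = (n : ℝ) + 4 := by push_cast; ring
      rw [hcast]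
      calc objFun f g₁ g₂ (x (n+1)) - Hstar
          ≤ (objFun f g₁ g₂ (x n) - Hstar)
            - (objFun f g₁ g₂ (x n) - Hstar) ^ 2 / (2 * (M * R ^ 2)) := h1
        _ = _ := hform
        _ ≤ 2 * (M * R ^ 2) / ((n : ℝ) + 4) := hgoal2
  -- constants
  have hsumpos : (0 : ℝ) < β₁ / L₁ + β₂ / L₂ := by positivity
  have hApos : (0 : ℝ) < (β₁ / L₁ + β₂ / L₂)⁻¹ := inv_pos.mpr hsumpos
  have h4R : 4 * R ^ 2 * (β₁ / L₁ + β₂ / L₂)⁻¹ = 2 * (M * R ^ 2) * pstar := by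
    rw [hpstar]
    field_simp
    ring
  have hp1 : 1 ≤ pstar := by
    rw [hpstar]
    have e1 : M * (β₁ / L₁) ≤ 1 := by
      have h := min_le_left (L₁ / β₁) (L₂ / β₂)
      calc M * (β₁ / L₁) ≤ L₁ / β₁ * (β₁ / L₁) :=
            mul_le_mul_of_nonneg_right (hM ▸ h) (by positivity)
        _ = 1 := by field_simp
    have e2 : M * (β₂ / L₂) ≤ 1 := by
      have h := min_le_right (L₁ / β₁) (L₂ / β₂)
      calc M * (β₂ / L₂) ≤ L₂ / β₂ * (β₂ / L₂) :=
            mul_le_mul_of_nonneg_right (hM ▸ h) (by positivity)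
        _ = 1 := by field_simp
    rw [le_div_iff₀ hMpos, one_mul, inv_eq_one_div, mul_one_div, le_div_iff₀ hsumpos]
    nlinarith [e1, e2]
  have hppos : 0 < pstar := lt_of_lt_of_le one_pos hp1
  have hm0 : (0 : ℤ) ≤ mstar := hmstar ▸ le_max_left _ _
  have hmcast : (0 : ℝ) ≤ (mstar : ℝ) := by exact_mod_cast hm0
  constructor
  · intro k
    cases k with
    | zero =>
      refine le_trans ?_ (le_max_left _ _)
      norm_num
    | succ n =>
      refine le_trans ((hbound (n+1) (by omega)).trans ?_) (le_max_right _ _)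
      have hq0 : (0 : ℝ) ≤ ((n + 1 : ℕ) : ℝ) := by positivity
      have hmax1 : max (((n + 1 : ℕ) : ℝ) - (mstar : ℝ)) 0 ≤ ((n + 1 : ℕ) : ℝ) :=
        max_le (by linarith) hq0
      have hmax0 : (0 : ℝ) ≤ max (((n + 1 : ℕ) : ℝ) - (mstar : ℝ)) 0 := le_max_right _ _
      rw [h4R, div_le_div_iff₀ (by positivity) (by positivity)]
      have hkey : max (((n + 1 : ℕ) : ℝ) - (mstar : ℝ)) 0 + pstar ≤
          pstar * (((n + 1 : ℕ) : ℝ) + 3) := by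
        nlinarith [hmax1, hq0, hp1]
      nlinarith [hkey, hDpos]
  · intro k hk
    rcases Nat.eq_zero_or_pos k with rfl | hk1
    · have hmr : (mstar : ℝ) = 0 := le_antisymm (by exact_mod_cast hk) hmcast
      have hz : mstar = 0 := by exact_mod_cast hmr
      rw [hmstar] at hz
      have he : (-1 + ⌈Real.logb 2 ((objFun f g₁ g₂ (x 0) - Hstar) /
          (M * R ^ 2))⌉ : ℤ) ≤ 0 := hz ▸ le_max_right (0 : ℤ) _
      have hceil : ⌈Real.logb 2 ((objFun f g₁ g₂ (x 0) - Hstar) /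
          (M * R ^ 2))⌉ ≤ (1 : ℤ) := by omega
      have hF0pos : 0 < objFun f g₁ g₂ (x 0) - Hstar := by linarith
      have hlog : Real.logb 2 ((objFun f g₁ g₂ (x 0) - Hstar) / (M * R ^ 2)) ≤ 1 := by
        have h12 := Int.ceil_le.mp hceil
        exact_mod_cast h12
      have hratio : (objFun f g₁ g₂ (x 0) - Hstar) / (M * R ^ 2) ≤ 2 := by
        have h2 := (Real.logb_le_iff_le_rpow (by norm_num : (1:ℝ) < 2)
          (by positivity : (0:ℝ) < (objFun f g₁ g₂ (x 0) - Hstar) / (M * R ^ 2))).mp hlog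
        rwa [Real.rpow_one] at h2
      have hF02 : objFun f g₁ g₂ (x 0) - Hstar ≤ 2 * (M * R ^ 2) := by
        rw [div_le_iff₀ hDpos] at hratio
        linarith
      rw [hmr]
      have hsimp : 4 * R ^ 2 * (β₁ / L₁ + β₂ / L₂)⁻¹ /
          (((0 : ℕ) : ℝ) - 0 + pstar) = 2 * (M * R ^ 2) := by
        rw [h4R]
        push_cast
        rw [zero_sub, neg_zero, zero_add]
        field_simp
      rw [hsimp]
      exact hF02
    · refine (hbound k hk1).trans ?_
      have hden2 : (0 : ℝ) < (k : ℝ) - (mstar : ℝ) + pstar := by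
        have : (mstar : ℝ) ≤ (k : ℝ) := hk
        linarith
      have hkR : (0 : ℝ) ≤ (k : ℝ) := by positivity
      rw [h4R, div_le_div_iff₀ (by positivity) hden2]
      have hkey : (k : ℝ) - (mstar : ℝ) + pstar ≤ pstar * ((k : ℝ) + 3) := by
        nlinarith [hmcast, hkR, hp1]
      nlinarith [hkey, hDpos]
end

section
/- For every k ≥ 0 the alternating minimization iterates satisfy: H^k − H^{k+1/2} ≥ (1/2)(H^k − H*) if H^k − H* > 2L₁R²/β₁, and H^k − H^{k+1/2} ≥ (β₁/(4L₁R²))(H^k − H*)² otherwise; and symmetrically H^{k+1/2} − H^{k+1} ≥ (1/2)(H^{k+1/2} − H*) if H^{k+1/2} − H* > 2L₂R²/β₂, and H^{k+1/2} − H^{k+1} ≥ (β₂/(4L₂R²))(H^{k+1/2} − H*)² otherwise. Here H^{k+1/2} = H(x₁^{k+1}, x₂^k), and when Lᵢ/βᵢ = ∞ the corresponding inequality is trivially interpreted. -/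
/-!
Fix a minimizer `w` of `H`. Convexity of `f` gives `f w ≥ f z + ∇f(z)(w - z)`, and the
first-order optimality of the block minimized last absorbs that block's part of this gradient
term, leaving `H z - H* ≤ g₁ z₁ - g₁ w₁ - ∇₁f(z)(w₁ - z₁)`. Moving the other block along the
segment towards `w₁`, the block descent inequality and convexity of `g₁` show that the next
half-step lowers `H` by at least `t (H z - H*) - t² L₁ R² / (2 β₁)` for every `t ∈ [0, 1]`,
since `β₁ ‖z₁ - w₁‖² ≤ N(z - w)² ≤ R²`. Taking `t = 1` or `t = (H z - H*) β₁ / (2 L₁ R²)` gives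
the two regimes; the second half-step is symmetric.
-/

open Set

lemma quadratic_descent_cases {a D dec : ℝ} (ha : 0 < a) (hD : 0 ≤ D)
    (hdec : ∀ t ∈ Icc (0 : ℝ) 1, t * D - a / 2 * t ^ 2 ≤ dec) :
    (2 * a < D → D / 2 ≤ dec) ∧ (D ≤ 2 * a → D ^ 2 / (4 * a) ≤ dec) := by
  refine ⟨fun hlarge => ?_, fun hsmall => ?_⟩
  · linarith [hdec 1 (by simp)]
  · have ht : D / (2 * a) ∈ Icc (0 : ℝ) 1 :=
      ⟨by positivity, (div_le_one (by positivity)).2 hsmall⟩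
    have hval : D / (2 * a) * D - a / 2 * (D / (2 * a)) ^ 2 = 3 / 2 * (D ^ 2 / (4 * a)) := by
      field_simp
      ring
    have hnonneg : 0 ≤ D ^ 2 / (4 * a) := by positivity
    linarith [hdec _ ht]

section

variable {E : Type*} [NormedAddCommGroup E] [NormedSpace ℝ E] {S : Set E} {x y : E}

lemma le_fderiv_of_le_add_smul_sub {φ : E → ℝ} {φ' : E →L[ℝ] ℝ} {c : ℝ}
    (hS : Convex ℝ S) (hx : x ∈ S) (hy : y ∈ S) (hφ : HasFDerivWithinAt φ φ' S x)
    (h : ∀ t ∈ Icc (0 : ℝ) 1, φ x + t * c ≤ φ (x + t • (y - x))) :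
    c ≤ φ' (y - x) := by
  have hline : HasDerivWithinAt (fun t : ℝ => x + t • (y - x)) (y - x) (Icc 0 1) 0 := by
    simpa using (((hasDerivAt_id (0 : ℝ)).smul_const (y - x)).const_add x).hasDerivWithinAt
  have hu : HasDerivWithinAt (fun t => φ (x + t • (y - x)) - t * c) (φ' (y - x) - c)
      (Icc 0 1) 0 := by
    refine (hφ.comp_hasDerivWithinAt_of_eq 0 hline
      (fun t ht => hS.add_smul_sub_mem hx hy ht) (by simp)).sub ?_
    simpa using ((hasDerivAt_id (0 : ℝ)).mul_const c).hasDerivWithinAt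
  have hmin : IsLocalMinOn (fun t => φ (x + t • (y - x)) - t * c) (Icc 0 1) 0 :=
    IsMinOn.localize fun t ht => by
      show φ (x + (0 : ℝ) • (y - x)) - 0 * c ≤ φ (x + t • (y - x)) - t * c
      rw [zero_smul, add_zero, zero_mul, sub_zero]
      linarith [h t ht]
  have hcone : (1 : ℝ) ∈ posTangentConeAt (Icc (0 : ℝ) 1) 0 :=
    mem_posTangentConeAt_of_segment_subset (by simp [segment_eq_Icc])
  simpa using hmin.hasFDerivWithinAt_nonneg hu hcone

lemma ConvexOn.apply_add_smul_sub_le {g : E → ℝ} (hg : ConvexOn ℝ S g) (hx : x ∈ S)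
    (hy : y ∈ S) {t : ℝ} (ht : t ∈ Icc (0 : ℝ) 1) :
    g (x + t • (y - x)) ≤ g x + t * (g y - g x) := by
  have h := hg.2 hx hy (sub_nonneg.2 ht.2) ht.1 (sub_add_cancel 1 t)
  rw [show x + t • (y - x) = (1 - t) • x + t • y by module]
  simp only [smul_eq_mul] at h
  linarith

lemma ConvexOn.hasFDerivWithinAt_le_sub {f : E → ℝ} {f' : E →L[ℝ] ℝ} (hf : ConvexOn ℝ S f)
    (hd : HasFDerivWithinAt f f' S x) (hx : x ∈ S) (hy : y ∈ S) :
    f' (y - x) ≤ f y - f x := by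
  have h := le_fderiv_of_le_add_smul_sub (c := f x - f y) hf.1 hx hy hd.neg fun t ht => by
    simp only [Pi.neg_apply]
    linarith [hf.apply_add_smul_sub_le hx hy ht]
  simp only [neg_apply] at h
  linarith

lemma IsMinOn.sub_le_fderiv_of_convexOn {φ g : E → ℝ} {φ' : E →L[ℝ] ℝ}
    (hmin : IsMinOn (φ + g) S x) (hS : Convex ℝ S) (hx : x ∈ S) (hy : y ∈ S)
    (hφ : HasFDerivWithinAt φ φ' S x) (hg : ConvexOn ℝ S g) :
    g x - g y ≤ φ' (y - x) :=
  le_fderiv_of_le_add_smul_sub hS hx hy hφ fun t ht => by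
    have h := isMinOn_iff.1 hmin _ (hS.add_smul_sub_mem hx hy ht)
    simp only [Pi.add_apply] at h
    linarith [hg.apply_add_smul_sub_le hx hy ht]

lemma le_sub_of_descent_of_gap {φ g : E → ℝ} {ℓ : E →L[ℝ] ℝ} {L r Δ m t : ℝ}
    (hS : Convex ℝ S) (hx : x ∈ S) (hy : y ∈ S) (hL : 0 ≤ L)
    (hdesc : ∀ h, x + h ∈ S → φ (x + h) ≤ φ x + ℓ h + L / 2 * ‖h‖ ^ 2)
    (hg : ConvexOn ℝ S g) (hgap : Δ ≤ g x - g y - ℓ (y - x)) (hdist : ‖y - x‖ ^ 2 ≤ r)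
    (hm : ∀ u ∈ S, m ≤ φ u + g u) (ht : t ∈ Icc (0 : ℝ) 1) :
    t * Δ - L * r / 2 * t ^ 2 ≤ φ x + g x - m := by
  have hmem := hS.add_smul_sub_mem hx hy ht
  have hφ := hdesc _ hmem
  rw [map_smul, smul_eq_mul, norm_smul, mul_pow, Real.norm_eq_abs, sq_abs] at hφ
  have hΔ : t * Δ ≤ t * (g x - g y - ℓ (y - x)) := mul_le_mul_of_nonneg_left hgap ht.1
  have hquad : L / 2 * (t ^ 2 * ‖y - x‖ ^ 2) ≤ L / 2 * (t ^ 2 * r) := by gcongr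
  linarith [hg.apply_add_smul_sub_le hx hy ht, hm _ hmem]

lemma descent_cases_of_gap {φ g : E → ℝ} {ℓ : E →L[ℝ] ℝ} {L β R Δ m : ℝ}
    (hS : Convex ℝ S) (hx : x ∈ S) (hy : y ∈ S) (hL : 0 < L) (hβ : 0 < β) (hR : 0 < R)
    (hdesc : ∀ h, x + h ∈ S → φ (x + h) ≤ φ x + ℓ h + L / 2 * ‖h‖ ^ 2)
    (hg : ConvexOn ℝ S g) (hΔ : 0 ≤ Δ) (hgap : Δ ≤ g x - g y - ℓ (y - x))
    (hdist : β * ‖x - y‖ ^ 2 ≤ R ^ 2) (hm : ∀ u ∈ S, m ≤ φ u + g u) :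
    (2 * L * R ^ 2 / β < Δ → 1 / 2 * Δ ≤ φ x + g x - m) ∧
    (Δ ≤ 2 * L * R ^ 2 / β → β / (4 * L * R ^ 2) * Δ ^ 2 ≤ φ x + g x - m) := by
  have hdist' : ‖y - x‖ ^ 2 ≤ R ^ 2 / β := by
    rw [norm_sub_rev, le_div_iff₀ hβ]
    linarith
  have h2a : 2 * L * R ^ 2 / β = 2 * (L * (R ^ 2 / β)) := by ring
  have hcoef : β / (4 * L * R ^ 2) * Δ ^ 2 = Δ ^ 2 / (4 * (L * (R ^ 2 / β))) := by
    field_simp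
  rw [h2a, hcoef, one_div_mul_eq_div]
  exact quadratic_descent_cases (by positivity) hΔ fun t ht => by
    simpa [mul_div_assoc] using le_sub_of_descent_of_gap hS hx hy hL.le hdesc hg hgap hdist' hm ht

end

section

variable {B₁ B₂ : Type*} [NormedAddCommGroup B₁] [NormedSpace ℝ B₁]
  [NormedAddCommGroup B₂] [NormedSpace ℝ B₂]
  {f : B₁ × B₂ → ℝ} {Df : B₁ × B₂ → (B₁ × B₂) →L[ℝ] ℝ} {g₁ : B₁ → ℝ} {g₂ : B₂ → ℝ}
  {S₁ : Set B₁} {S₂ : Set B₂} {L β R m : ℝ} {z w : B₁ × B₂}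

lemma objFun_descent_fst (hS₁ : Convex ℝ S₁) (hS₂ : Convex ℝ S₂)
    (hg₁ : ConvexOn ℝ S₁ g₁) (hg₂ : ConvexOn ℝ S₂ g₂) (hf : ConvexOn ℝ (S₁ ×ˢ S₂) f)
    (hfd : HasFDerivWithinAt f (Df z) (S₁ ×ˢ S₂) z) (hL : 0 < L) (hβ : 0 < β) (hR : 0 < R)
    (hdesc : ∀ h₁ : B₁, z.1 + h₁ ∈ S₁ →
      f (z.1 + h₁, z.2) ≤ f z + Df z (h₁, 0) + L / 2 * ‖h₁‖ ^ 2)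
    (hz : z ∈ S₁ ×ˢ S₂) (hw : w ∈ S₁ ×ˢ S₂) (hwz : objFun f g₁ g₂ w ≤ objFun f g₁ g₂ z)
    (hopt₂ : ∀ y₂ ∈ S₂, objFun f g₁ g₂ z ≤ objFun f g₁ g₂ (z.1, y₂))
    (hdist : β * ‖z.1 - w.1‖ ^ 2 ≤ R ^ 2) (hm : ∀ y₁ ∈ S₁, m ≤ objFun f g₁ g₂ (y₁, z.2)) :
    (2 * L * R ^ 2 / β < objFun f g₁ g₂ z - objFun f g₁ g₂ w →
      1 / 2 * (objFun f g₁ g₂ z - objFun f g₁ g₂ w) ≤ objFun f g₁ g₂ z - m) ∧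
    (objFun f g₁ g₂ z - objFun f g₁ g₂ w ≤ 2 * L * R ^ 2 / β →
      β / (4 * L * R ^ 2) * (objFun f g₁ g₂ z - objFun f g₁ g₂ w) ^ 2 ≤
        objFun f g₁ g₂ z - m) := by
  have hgrad := hf.hasFDerivWithinAt_le_sub hfd hz hw
  have hslice : HasFDerivWithinAt (fun y₂ => f (z.1, y₂)) ((Df z).comp (.inr ℝ B₁ B₂)) S₂ z.2 :=
    hfd.comp z.2 (hasFDerivAt_prodMk_right z.1 z.2).hasFDerivWithinAt fun _ hy => mk_mem_prod hz.1 hy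
  have hmin₂ : IsMinOn ((fun y₂ => f (z.1, y₂)) + g₂) S₂ z.2 := isMinOn_iff.2 fun y₂ hy₂ => by
    have h := hopt₂ y₂ hy₂
    simp only [objFun, Pi.add_apply] at h ⊢
    linarith
  have hopt := hmin₂.sub_le_fderiv_of_convexOn hS₂ hz.2 hw.2 hslice hg₂
  have hgap : objFun f g₁ g₂ z - objFun f g₁ g₂ w ≤
      g₁ z.1 - g₁ w.1 - (Df z).comp (.inl ℝ B₁ B₂) (w.1 - z.1) := by
    have hsplit := (Df z).comp_inl_add_comp_inr (w - z)
    rw [Prod.fst_sub, Prod.snd_sub] at hsplit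
    simp only [objFun]
    linarith
  have hm' : ∀ y₁ ∈ S₁, m - g₂ z.2 ≤ f (y₁, z.2) + g₁ y₁ := fun y₁ hy₁ => by
    linarith [show m ≤ f (y₁, z.2) + g₁ y₁ + g₂ z.2 from hm y₁ hy₁]
  have hval : objFun f g₁ g₂ z - m = f (z.1, z.2) + g₁ z.1 - (m - g₂ z.2) := by
    simp only [objFun]
    ring
  rw [hval]
  exact descent_cases_of_gap (φ := fun y₁ => f (y₁, z.2)) hS₁ hz.1 hw.1 hL hβ hR hdesc hg₁
    (sub_nonneg.2 hwz) hgap hdist hm'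

lemma objFun_descent_snd (hS₁ : Convex ℝ S₁) (hS₂ : Convex ℝ S₂)
    (hg₁ : ConvexOn ℝ S₁ g₁) (hg₂ : ConvexOn ℝ S₂ g₂) (hf : ConvexOn ℝ (S₁ ×ˢ S₂) f)
    (hfd : HasFDerivWithinAt f (Df z) (S₁ ×ˢ S₂) z) (hL : 0 < L) (hβ : 0 < β) (hR : 0 < R)
    (hdesc : ∀ h₂ : B₂, z.2 + h₂ ∈ S₂ →
      f (z.1, z.2 + h₂) ≤ f z + Df z (0, h₂) + L / 2 * ‖h₂‖ ^ 2)
    (hz : z ∈ S₁ ×ˢ S₂) (hw : w ∈ S₁ ×ˢ S₂) (hwz : objFun f g₁ g₂ w ≤ objFun f g₁ g₂ z)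
    (hopt₁ : ∀ y₁ ∈ S₁, objFun f g₁ g₂ z ≤ objFun f g₁ g₂ (y₁, z.2))
    (hdist : β * ‖z.2 - w.2‖ ^ 2 ≤ R ^ 2) (hm : ∀ y₂ ∈ S₂, m ≤ objFun f g₁ g₂ (z.1, y₂)) :
    (2 * L * R ^ 2 / β < objFun f g₁ g₂ z - objFun f g₁ g₂ w →
      1 / 2 * (objFun f g₁ g₂ z - objFun f g₁ g₂ w) ≤ objFun f g₁ g₂ z - m) ∧
    (objFun f g₁ g₂ z - objFun f g₁ g₂ w ≤ 2 * L * R ^ 2 / β →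
      β / (4 * L * R ^ 2) * (objFun f g₁ g₂ z - objFun f g₁ g₂ w) ^ 2 ≤
        objFun f g₁ g₂ z - m) := by
  have hgrad := hf.hasFDerivWithinAt_le_sub hfd hz hw
  have hslice : HasFDerivWithinAt (fun y₁ => f (y₁, z.2)) ((Df z).comp (.inl ℝ B₁ B₂)) S₁ z.1 :=
    hfd.comp z.1 (hasFDerivAt_prodMk_left z.1 z.2).hasFDerivWithinAt fun _ hy => mk_mem_prod hy hz.2
  have hmin₁ : IsMinOn ((fun y₁ => f (y₁, z.2)) + g₁) S₁ z.1 := isMinOn_iff.2 fun y₁ hy₁ => by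
    have h := hopt₁ y₁ hy₁
    simp only [objFun, Pi.add_apply] at h ⊢
    linarith
  have hopt := hmin₁.sub_le_fderiv_of_convexOn hS₁ hz.1 hw.1 hslice hg₁
  have hgap : objFun f g₁ g₂ z - objFun f g₁ g₂ w ≤
      g₂ z.2 - g₂ w.2 - (Df z).comp (.inr ℝ B₁ B₂) (w.2 - z.2) := by
    have hsplit := (Df z).comp_inl_add_comp_inr (w - z)
    rw [Prod.fst_sub, Prod.snd_sub] at hsplit
    simp only [objFun]
    linarith
  have hm' : ∀ y₂ ∈ S₂, m - g₁ z.1 ≤ f (z.1, y₂) + g₂ y₂ := fun y₂ hy₂ => by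
    linarith [show m ≤ f (z.1, y₂) + g₁ z.1 + g₂ y₂ from hm y₂ hy₂]
  have hval : objFun f g₁ g₂ z - m = f (z.1, z.2) + g₂ z.2 - (m - g₁ z.1) := by
    simp only [objFun]
    ring
  rw [hval]
  exact descent_cases_of_gap (φ := fun y₂ => f (z.1, y₂)) hS₂ hz.2 hw.2 hL hβ hR hdesc hg₂
    (sub_nonneg.2 hwz) hgap hdist hm'

end

lemma alternating_min_mem_and_le {B₁ B₂ : Type*} {f : B₁ × B₂ → ℝ} {g₁ : B₁ → ℝ}
    {g₂ : B₂ → ℝ} {S₁ : Set B₁} {S₂ : Set B₂} {x : ℕ → B₁ × B₂} (hx0 : x 0 ∈ S₁ ×ˢ S₂)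
    (hstep1 : ∀ k : ℕ, (x (k + 1)).1 ∈ S₁ ∧ ∀ y₁ ∈ S₁,
      objFun f g₁ g₂ ((x (k + 1)).1, (x k).2) ≤ objFun f g₁ g₂ (y₁, (x k).2))
    (hstep2 : ∀ k : ℕ, (x (k + 1)).2 ∈ S₂ ∧ ∀ y₂ ∈ S₂,
      objFun f g₁ g₂ (x (k + 1)) ≤ objFun f g₁ g₂ ((x (k + 1)).1, y₂)) :
    ∀ n, x n ∈ S₁ ×ˢ S₂ ∧ objFun f g₁ g₂ (x n) ≤ objFun f g₁ g₂ (x 0)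
  | 0 => ⟨hx0, le_rfl⟩
  | n + 1 =>
    have ih := alternating_min_mem_and_le hx0 hstep1 hstep2 n
    ⟨mk_mem_prod (hstep1 n).1 (hstep2 n).1,
      ((hstep2 n).2 _ ih.1.2).trans (((hstep1 n).2 _ ih.1.1).trans ih.2)⟩

theorem stmt10_general
    {B₁ B₂ : Type*}
    [NormedAddCommGroup B₁] [NormedSpace ℝ B₁]
    [NormedAddCommGroup B₂] [NormedSpace ℝ B₂]
    (f : B₁ × B₂ → ℝ) (Df : B₁ × B₂ → (B₁ × B₂) →L[ℝ] ℝ)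
    (g₁ : B₁ → ℝ) (g₂ : B₂ → ℝ) (S₁ : Set B₁) (S₂ : Set B₂)
    -- (P3): g₁, g₂ proper convex, subdifferentiable on their domains
    (hS₁c : Convex ℝ S₁) (hS₂c : Convex ℝ S₂)
    (hg₁conv : ConvexOn ℝ S₁ g₁) (hg₂conv : ConvexOn ℝ S₂ g₂)
    -- (P4): f convex and Fréchet differentiable on dom g₁ × dom g₂, with derivative Df
    (hfconv : ConvexOn ℝ (S₁ ×ˢ S₂) f)
    (hfdiff : ∀ x ∈ S₁ ×ˢ S₂, HasFDerivWithinAt f (Df x) (S₁ ×ˢ S₂) x)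
    -- (P2): a norm `N` on the product space and the constants β₁, β₂
    (N : B₁ × B₂ → ℝ) (β₁ β₂ : ℝ) (hβ₁ : 0 < β₁) (hβ₂ : 0 < β₂)
    (hNnonneg : ∀ z : B₁ × B₂, 0 ≤ N z)
    (hN₁ : ∀ z : B₁ × B₂, β₁ * ‖z.1‖ ^ 2 ≤ N z ^ 2)
    (hN₂ : ∀ z : B₁ × B₂, β₂ * ‖z.2‖ ^ 2 ≤ N z ^ 2)
    -- (P5): block Lipschitz continuity of the partial derivatives, with finite
    -- constants L₁, L₂ > 0, together with the (equivalent) block descent inequalities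
    (L₁ L₂ : ℝ) (hL₁pos : 0 < L₁) (hL₂pos : 0 < L₂)
    (hdesc₁ : ∀ x₁ ∈ S₁, ∀ x₂ ∈ S₂, ∀ h₁ : B₁, x₁ + h₁ ∈ S₁ →
      f (x₁ + h₁, x₂) ≤ f (x₁, x₂) + Df (x₁, x₂) (h₁, 0) + L₁ / 2 * ‖h₁‖ ^ 2)
    (hdesc₂ : ∀ x₁ ∈ S₁, ∀ x₂ ∈ S₂, ∀ h₂ : B₂, x₂ + h₂ ∈ S₂ →
      f (x₁, x₂ + h₂) ≤ f (x₁, x₂) + Df (x₁, x₂) (0, h₂) + L₂ / 2 * ‖h₂‖ ^ 2)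
    -- (P6): nonempty optimal set X with optimal value H*
    (X : Set (B₁ × B₂))
    (hX : X = {y ∈ S₁ ×ˢ S₂ | ∀ z ∈ S₁ ×ˢ S₂, objFun f g₁ g₂ y ≤ objFun f g₁ g₂ z})
    (hXne : X.Nonempty)
    (Hstar : ℝ) (hHstar : ∀ y ∈ X, objFun f g₁ g₂ y = Hstar)
    -- the alternating minimization sequence
    (x : ℕ → B₁ × B₂)
    (hx0 : x 0 ∈ S₁ ×ˢ S₂)
    (hinit : ∀ y₂ ∈ S₂, objFun f g₁ g₂ (x 0) ≤ objFun f g₁ g₂ ((x 0).1, y₂))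
    (hstep1 : ∀ k : ℕ, (x (k + 1)).1 ∈ S₁ ∧ ∀ y₁ ∈ S₁,
      objFun f g₁ g₂ ((x (k + 1)).1, (x k).2) ≤ objFun f g₁ g₂ (y₁, (x k).2))
    (hstep2 : ∀ k : ℕ, (x (k + 1)).2 ∈ S₂ ∧ ∀ y₂ ∈ S₂,
      objFun f g₁ g₂ (x (k + 1)) ≤ objFun f g₁ g₂ ((x (k + 1)).1, y₂))
    -- compactness of the level set of H at x⁰ and its diameter R relative to X
    (R : ℝ) (hRpos : 0 < R)
    (hR : ∀ z ∈ S₁ ×ˢ S₂, objFun f g₁ g₂ z ≤ objFun f g₁ g₂ (x 0) →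
      ∀ y ∈ X, N (z - y) ≤ R)
    :
    ∀ k : ℕ,
      (2 * L₁ * R ^ 2 / β₁ < objFun f g₁ g₂ (x k) - Hstar →
        1 / 2 * (objFun f g₁ g₂ (x k) - Hstar) ≤
          objFun f g₁ g₂ (x k) - objFun f g₁ g₂ ((x (k + 1)).1, (x k).2)) ∧
      (objFun f g₁ g₂ (x k) - Hstar ≤ 2 * L₁ * R ^ 2 / β₁ →
        β₁ / (4 * L₁ * R ^ 2) * (objFun f g₁ g₂ (x k) - Hstar) ^ 2 ≤
          objFun f g₁ g₂ (x k) - objFun f g₁ g₂ ((x (k + 1)).1, (x k).2)) ∧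
      (2 * L₂ * R ^ 2 / β₂ < objFun f g₁ g₂ ((x (k + 1)).1, (x k).2) - Hstar →
        1 / 2 * (objFun f g₁ g₂ ((x (k + 1)).1, (x k).2) - Hstar) ≤
          objFun f g₁ g₂ ((x (k + 1)).1, (x k).2) - objFun f g₁ g₂ (x (k + 1))) ∧
      (objFun f g₁ g₂ ((x (k + 1)).1, (x k).2) - Hstar ≤ 2 * L₂ * R ^ 2 / β₂ →
        β₂ / (4 * L₂ * R ^ 2) * (objFun f g₁ g₂ ((x (k + 1)).1, (x k).2) - Hstar) ^ 2 ≤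
          objFun f g₁ g₂ ((x (k + 1)).1, (x k).2) - objFun f g₁ g₂ (x (k + 1))) := by
  intro k
  obtain ⟨w, hwX⟩ := hXne
  rw [← hHstar w hwX]
  have hdist : ∀ z ∈ S₁ ×ˢ S₂, objFun f g₁ g₂ z ≤ objFun f g₁ g₂ (x 0) →
      β₁ * ‖z.1 - w.1‖ ^ 2 ≤ R ^ 2 ∧ β₂ * ‖z.2 - w.2‖ ^ 2 ≤ R ^ 2 := fun z hz hle =>
    have hNR := pow_le_pow_left₀ (hNnonneg _) (hR z hz hle w hwX) 2
    ⟨(hN₁ (z - w)).trans hNR, (hN₂ (z - w)).trans hNR⟩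
  rw [hX] at hwX
  obtain ⟨hw, hwmin⟩ := hwX
  obtain ⟨hz, hzle⟩ := alternating_min_mem_and_le hx0 hstep1 hstep2 k
  have hz' : ((x (k + 1)).1, (x k).2) ∈ S₁ ×ˢ S₂ := mk_mem_prod (hstep1 k).1 hz.2
  have hz'le := (hstep1 k).2 _ hz.1
  have hopt₂ : ∀ y₂ ∈ S₂, objFun f g₁ g₂ (x k) ≤ objFun f g₁ g₂ ((x k).1, y₂) := by
    cases k with
    | zero => exact hinit
    | succ n => exact (hstep2 n).2
  have hfst := objFun_descent_fst hS₁c hS₂c hg₁conv hg₂conv hfconv (hfdiff _ hz) hL₁pos hβ₁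
    hRpos (hdesc₁ _ hz.1 _ hz.2) hz hw (hwmin _ hz) hopt₂ (hdist _ hz hzle).1 (hstep1 k).2
  have hsnd := objFun_descent_snd hS₁c hS₂c hg₁conv hg₂conv hfconv (hfdiff _ hz') hL₂pos hβ₂
    hRpos (hdesc₂ _ hz'.1 _ hz'.2) hz' hw (hwmin _ hz') (hstep1 k).2
    (hdist _ hz' (hz'le.trans hzle)).2 (hstep2 k).2
  exact ⟨hfst.1, hfst.2, hsnd.1, hsnd.2⟩

/-- descent properties of the two half-steps of alternating
minimization in the plain convex case: for every `k ≥ 0`,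
`H^k - H^{k+1/2} ≥ (1/2)(H^k - H*)` if `H^k - H* > 2L₁R²/β₁`, and
`H^k - H^{k+1/2} ≥ (β₁/(4L₁R²))(H^k - H*)²` otherwise; and symmetrically
`H^{k+1/2} - H^{k+1} ≥ (1/2)(H^{k+1/2} - H*)` if `H^{k+1/2} - H* > 2L₂R²/β₂`, and
`H^{k+1/2} - H^{k+1} ≥ (β₂/(4L₂R²))(H^{k+1/2} - H*)²` otherwise, where
`H^{k+1/2} = H(x₁^{k+1}, x₂^k)`. -/
theorem stmt10
    {B₁ B₂ : Type*}
    [NormedAddCommGroup B₁] [NormedSpace ℝ B₁] [CompleteSpace B₁]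
    [NormedAddCommGroup B₂] [NormedSpace ℝ B₂] [CompleteSpace B₂]
    (f : B₁ × B₂ → ℝ) (Df : B₁ × B₂ → (B₁ × B₂) →L[ℝ] ℝ)
    (g₁ : B₁ → ℝ) (g₂ : B₂ → ℝ) (S₁ : Set B₁) (S₂ : Set B₂)
    -- (P3): g₁, g₂ proper convex, subdifferentiable on their domains
    (hS₁c : Convex ℝ S₁) (hS₂c : Convex ℝ S₂)
    (hS₁ne : S₁.Nonempty) (hS₂ne : S₂.Nonempty)
    (hg₁conv : ConvexOn ℝ S₁ g₁) (hg₂conv : ConvexOn ℝ S₂ g₂)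
    (hg₁sub : ∀ x₁ ∈ S₁, ∃ d : B₁ →L[ℝ] ℝ, ∀ y₁ ∈ S₁, g₁ x₁ + d (y₁ - x₁) ≤ g₁ y₁)
    (hg₂sub : ∀ x₂ ∈ S₂, ∃ d : B₂ →L[ℝ] ℝ, ∀ y₂ ∈ S₂, g₂ x₂ + d (y₂ - x₂) ≤ g₂ y₂)
    -- (P4): f convex and Fréchet differentiable on dom g₁ × dom g₂, with derivative Df
    (hfconv : ConvexOn ℝ (S₁ ×ˢ S₂) f)
    (hfdiff : ∀ x ∈ S₁ ×ˢ S₂, HasFDerivWithinAt f (Df x) (S₁ ×ˢ S₂) x)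
    -- (P2): a norm `N` on the product space and the constants β₁, β₂
    (N : B₁ × B₂ → ℝ) (β₁ β₂ : ℝ) (hβ₁ : 0 < β₁) (hβ₂ : 0 < β₂)
    (hNnonneg : ∀ z : B₁ × B₂, 0 ≤ N z)
    (hN₁ : ∀ z : B₁ × B₂, β₁ * ‖z.1‖ ^ 2 ≤ N z ^ 2)
    (hN₂ : ∀ z : B₁ × B₂, β₂ * ‖z.2‖ ^ 2 ≤ N z ^ 2)
    -- (P5): block Lipschitz continuity of the partial derivatives, with finite
    -- constants L₁, L₂ > 0, together with the (equivalent) block descent inequalities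
    (L₁ L₂ : ℝ) (hL₁pos : 0 < L₁) (hL₂pos : 0 < L₂)
    (hlip₁ : ∀ x₁ ∈ S₁, ∀ x₂ ∈ S₂, ∀ h₁ : B₁, x₁ + h₁ ∈ S₁ →
      ‖(Df (x₁ + h₁, x₂)).comp (ContinuousLinearMap.inl ℝ B₁ B₂) -
        (Df (x₁, x₂)).comp (ContinuousLinearMap.inl ℝ B₁ B₂)‖ ≤ L₁ * ‖h₁‖)
    (hlip₂ : ∀ x₁ ∈ S₁, ∀ x₂ ∈ S₂, ∀ h₂ : B₂, x₂ + h₂ ∈ S₂ →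
      ‖(Df (x₁, x₂ + h₂)).comp (ContinuousLinearMap.inr ℝ B₁ B₂) -
        (Df (x₁, x₂)).comp (ContinuousLinearMap.inr ℝ B₁ B₂)‖ ≤ L₂ * ‖h₂‖)
    (hdesc₁ : ∀ x₁ ∈ S₁, ∀ x₂ ∈ S₂, ∀ h₁ : B₁, x₁ + h₁ ∈ S₁ →
      f (x₁ + h₁, x₂) ≤ f (x₁, x₂) + Df (x₁, x₂) (h₁, 0) + L₁ / 2 * ‖h₁‖ ^ 2)
    (hdesc₂ : ∀ x₁ ∈ S₁, ∀ x₂ ∈ S₂, ∀ h₂ : B₂, x₂ + h₂ ∈ S₂ →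
      f (x₁, x₂ + h₂) ≤ f (x₁, x₂) + Df (x₁, x₂) (0, h₂) + L₂ / 2 * ‖h₂‖ ^ 2)
    -- (P6): nonempty optimal set X with optimal value H*
    (X : Set (B₁ × B₂))
    (hX : X = {y ∈ S₁ ×ˢ S₂ | ∀ z ∈ S₁ ×ˢ S₂, objFun f g₁ g₂ y ≤ objFun f g₁ g₂ z})
    (hXne : X.Nonempty)
    (Hstar : ℝ) (hHstar : ∀ y ∈ X, objFun f g₁ g₂ y = Hstar)
    -- projections onto X with respect to N
    (proj : B₁ × B₂ → B₁ × B₂)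
    (hproj : ∀ z ∈ S₁ ×ˢ S₂, proj z ∈ X ∧ ∀ y ∈ X, N (z - proj z) ≤ N (z - y))
    -- (P8c): g₁, g₂ closed (lower semicontinuous), compact level set, diameter R
    (hg₁lsc : LowerSemicontinuousOn g₁ S₁) (hg₂lsc : LowerSemicontinuousOn g₂ S₂)
    (hS₁cl : IsClosed S₁) (hS₂cl : IsClosed S₂)
    -- the alternating minimization sequence
    (x : ℕ → B₁ × B₂)
    (hx0 : x 0 ∈ S₁ ×ˢ S₂)
    (hinit : ∀ y₂ ∈ S₂, objFun f g₁ g₂ (x 0) ≤ objFun f g₁ g₂ ((x 0).1, y₂))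
    (hstep1 : ∀ k : ℕ, (x (k + 1)).1 ∈ S₁ ∧ ∀ y₁ ∈ S₁,
      objFun f g₁ g₂ ((x (k + 1)).1, (x k).2) ≤ objFun f g₁ g₂ (y₁, (x k).2))
    (hstep2 : ∀ k : ℕ, (x (k + 1)).2 ∈ S₂ ∧ ∀ y₂ ∈ S₂,
      objFun f g₁ g₂ (x (k + 1)) ≤ objFun f g₁ g₂ ((x (k + 1)).1, y₂))
    -- compactness of the level set of H at x⁰ and its diameter R relative to X
    (hcomp : IsCompact {z ∈ S₁ ×ˢ S₂ | objFun f g₁ g₂ z ≤ objFun f g₁ g₂ (x 0)})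
    (R : ℝ) (hRpos : 0 < R)
    (hR : ∀ z ∈ S₁ ×ˢ S₂, objFun f g₁ g₂ z ≤ objFun f g₁ g₂ (x 0) →
      ∀ y ∈ X, N (z - y) ≤ R)
    :
    ∀ k : ℕ,
      (2 * L₁ * R ^ 2 / β₁ < objFun f g₁ g₂ (x k) - Hstar →
        1 / 2 * (objFun f g₁ g₂ (x k) - Hstar) ≤
          objFun f g₁ g₂ (x k) - objFun f g₁ g₂ ((x (k + 1)).1, (x k).2)) ∧
      (objFun f g₁ g₂ (x k) - Hstar ≤ 2 * L₁ * R ^ 2 / β₁ →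
        β₁ / (4 * L₁ * R ^ 2) * (objFun f g₁ g₂ (x k) - Hstar) ^ 2 ≤
          objFun f g₁ g₂ (x k) - objFun f g₁ g₂ ((x (k + 1)).1, (x k).2)) ∧
      (2 * L₂ * R ^ 2 / β₂ < objFun f g₁ g₂ ((x (k + 1)).1, (x k).2) - Hstar →
        1 / 2 * (objFun f g₁ g₂ ((x (k + 1)).1, (x k).2) - Hstar) ≤
          objFun f g₁ g₂ ((x (k + 1)).1, (x k).2) - objFun f g₁ g₂ (x (k + 1))) ∧
      (objFun f g₁ g₂ ((x (k + 1)).1, (x k).2) - Hstar ≤ 2 * L₂ * R ^ 2 / β₂ →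
        β₂ / (4 * L₂ * R ^ 2) * (objFun f g₁ g₂ ((x (k + 1)).1, (x k).2) - Hstar) ^ 2 ≤
          objFun f g₁ g₂ ((x (k + 1)).1, (x k).2) - objFun f g₁ g₂ (x (k + 1))) :=
  stmt10_general f Df g₁ g₂ S₁ S₂ hS₁c hS₂c hg₁conv hg₂conv hfconv hfdiff N β₁ β₂ hβ₁ hβ₂ hNnonneg
    hN₁ hN₂ L₁ L₂ hL₁pos hL₂pos hdesc₁ hdesc₂ X hX hXne Hstar hHstar x hx0 hinit hstep1 hstep2 R
    hRpos hR
end
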